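/- Let k be a perfect field of characteristic p > 0 and E a finite-dimensional k-vector space. Let F : E → E be an additive map satisfying F(a·x) = a^p·F(x) for all a ∈ k, x ∈ E (Frobenius-semilinear), and V : E → E an additive map satisfying V(a^p·x) = a·V(x) for all a ∈ k, x ∈ E (semilinear over the inverse of Frobenius). Assume ker F = range V, ker V = range F, and 0 < dim_k(ker F) < dim_k E. Then: (i) V maps ker F into ker F, and F induces an additive endomorphism F̄ of E/ker F; (ii) the restriction V|_{ker F} : ker F → ker F is bijective if and only if F̄ : E/ker F → E/ker F is bijective, and both conditions are equivalent to the internal direct sum decomposition E = ker F ⊕ range F. (This is the compatibility of the Hasse invariant with duality over a perfect field: the Hasse invariant of a p-divisible group G, given by the Verschiebung on the Hodge filtration ker F, is invertible exactly when the Hasse invariant of the Cartier dual G^D, given by the Frobenius on E/ker F, is invertible.) -/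

import Mathlib

instance frobSurj (k : Type*) [Field k] (p : ℕ) [Fact p.Prime] [CharP k p] [PerfectRing k p] :
    RingHomSurjective (frobenius k p) :=
  ⟨(frobeniusEquiv k p).surjective⟩

instance frobSymmSurj (k : Type*) [Field k] (p : ℕ) [Fact p.Prime] [CharP k p]
    [PerfectRing k p] : RingHomSurjective ((frobeniusEquiv k p).symm : k →+* k) :=
  ⟨(frobeniusEquiv k p).symm.surjective⟩

/-!
Both Hasse invariants are invertible exactly when `E = ker F ⊕ range F`:
as `range V = ker F` and `ker V = range F`, the restriction of `V` to `ker F` is injective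
iff `ker F ⊓ ker V = ⊥` and maps onto `range V` iff `ker F ⊔ ker V = ⊤`. Dually, `F̄` is injective
iff `F x ∈ ker F` forces `F x = 0`, i.e. `ker F ⊓ range F = ⊥`, and surjective iff
`range F ⊔ ker F = ⊤`.
-/

namespace LinearMap

open Submodule

section Semilinear

variable {R R₂ M M₂ : Type*} [Ring R] [Ring R₂] [AddCommGroup M] [AddCommGroup M₂]
  [Module R M] [Module R₂ M₂] {σ : R →+* R₂} [RingHomSurjective σ]

theorem disjoint_range_iff_comap_le_ker (f : M →ₛₗ[σ] M₂) (q : Submodule R₂ M₂) :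
    Disjoint q (range f) ↔ q.comap f ≤ ker f := by
  refine ⟨fun h x hx => (Submodule.disjoint_def.mp h) _ hx (mem_range_self f x), fun h => ?_⟩
  rw [Submodule.disjoint_def]
  rintro - hy ⟨x, rfl⟩
  exact h hy

theorem bijOn_range_iff_isCompl_ker (f : M →ₛₗ[σ] M₂) (p : Submodule R M) :
    Set.BijOn f p (range f) ↔ IsCompl p (ker f) := by
  have hmaps : Set.MapsTo f p (range f) := fun x _ => mem_range_self f x
  rw [Set.BijOn, isCompl_iff, disjoint_ker_iff_injOn, codisjoint_iff, ← top_le_iff,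
    Submodule.surjOn_iff_le_map, range_eq_map, LinearMap.map_le_map_iff, ← range_eq_map]
  exact and_iff_right hmaps

end Semilinear

variable {R M : Type*} [Ring R] [AddCommGroup M] [Module R M] {σ : R →+* R}

theorem ker_le_comap_ker (f : M →ₛₗ[σ] M) : ker f ≤ (ker f).comap f :=
  fun x (hx : f x = 0) => show f (f x) = 0 by rw [hx, map_zero]

theorem bijective_mapQ_ker_iff_isCompl_range [RingHomSurjective σ] (f : M →ₛₗ[σ] M) :
    Function.Bijective ((ker f).mapQ (ker f) f (ker_le_comap_ker f)) ↔
      IsCompl (ker f) (range f) := by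
  rw [Function.Bijective, ← ker_eq_bot, ← range_eq_top, ker_mapQ, range_mapQ, map_mkQ_eq_top,
    isCompl_iff, codisjoint_iff, sup_comm, disjoint_range_iff_comap_le_ker, ← le_bot_iff,
    map_le_iff_le_comap, comap_bot, ker_mkQ]

end LinearMap

theorem hasse_invariant_duality_perfect_field
    (k : Type*) [Field k] (p : ℕ) [Fact p.Prime] [CharP k p] [PerfectRing k p]
    (E : Type*) [AddCommGroup E] [Module k E]
    (F : E →ₛₗ[frobenius k p] E)
    (V : E →ₛₗ[((frobeniusEquiv k p).symm : k →+* k)] E)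
    (hFV : LinearMap.ker F = LinearMap.range V)
    (hVF : LinearMap.ker V = LinearMap.range F) :
    (∀ x ∈ LinearMap.ker F, V x ∈ LinearMap.ker F) ∧
    ∃ Fbar : (E ⧸ LinearMap.ker F) →+ (E ⧸ LinearMap.ker F),
      (∀ x : E, Fbar (Submodule.Quotient.mk x) = Submodule.Quotient.mk (F x)) ∧
      (Set.BijOn V (LinearMap.ker F : Set E) (LinearMap.ker F : Set E) ↔
        Function.Bijective Fbar) ∧
      (Set.BijOn V (LinearMap.ker F : Set E) (LinearMap.ker F : Set E) ↔
        IsCompl (LinearMap.ker F) (LinearMap.range F)) := by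
  open LinearMap in
  have hV : Set.BijOn V (ker F : Set E) (ker F) ↔ IsCompl (ker F) (range F) := by
    rw [← hVF, ← bijOn_range_iff_isCompl_ker, ← hFV]
  refine ⟨fun x _ => hFV ▸ mem_range_self V x,
    ((ker F).mapQ (ker F) F (ker_le_comap_ker F)).toAddMonoidHom, fun _ => rfl, ?_, hV⟩
  exact hV.trans (bijective_mapQ_ker_iff_isCompl_range F).symm
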